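/- Let $\ell > 1$, $\epsilon > 0$, $A \in \mathbb{R}$, $B \in (0,1)$ with $\frac{(A+1)_+}{\alpha} + \frac{1-B}{2} \leq \ell$. Define $H(x,v) = E(x,v)^\ell + \epsilon \frac{\langle x\rangle^A}{\langle v\rangle^B}(x\cdot v)$. Then there exist constants $c_1, c_2 > 0$ (depending on the parameters) such that for all sufficiently small $\epsilon > 0$, $c_1 E(x,v)^\ell \leq H(x,v) \leq c_2 E(x,v)^\ell$ for all $(x,v) \in \mathbb{R}^d \times \mathbb{R}^d$. -/

import Mathlib

/-!
With `F = α E ≥ 1` one has `⟨x⟩^α ≤ F` and `⟨v⟩² ≤ 3F`, while Cauchy–Schwarz bounds the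
perturbation by `⟨x⟩^(A+1) ⟨v⟩^(1-B) ≤ F^p (3F)^q` with `p = (A+1)₊/α`, `q = (1-B)/2`.
Since `F ≥ 1` and `p + q ≤ ℓ`, this is at most `C E^ℓ` with `C = 3^q α^ℓ`, so for
`ε ≤ 1/(2C)` the perturbation is at most `E^ℓ / 2` in absolute value.
-/

open Real

noncomputable section

def energy (α r s : ℝ) : ℝ := s ^ 2 / 2 + √(1 + r ^ 2) ^ α / α

lemma one_le_sqrt_one_add_sq (r : ℝ) : 1 ≤ √(1 + r ^ 2) :=
  one_le_sqrt.mpr (by nlinarith [sq_nonneg r])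

lemma abs_inner_le_sqrt_one_add_sq_mul {F : Type*} [NormedAddCommGroup F] [InnerProductSpace ℝ F]
    (x v : F) : |inner ℝ x v| ≤ √(1 + ‖x‖ ^ 2) * √(1 + ‖v‖ ^ 2) := by
  have hle (r : ℝ) : r ≤ √(1 + r ^ 2) := le_sqrt_of_sq_le (by linarith)
  calc |inner ℝ x v| ≤ ‖x‖ * ‖v‖ := abs_real_inner_le_norm x v
    _ ≤ √(1 + ‖x‖ ^ 2) * √(1 + ‖v‖ ^ 2) := by gcongr <;> exact hle _

lemma abs_weight_mul_inner_le {F : Type*} [NormedAddCommGroup F] [InnerProductSpace ℝ F]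
    (A B : ℝ) (x v : F) :
    |√(1 + ‖x‖ ^ 2) ^ A / √(1 + ‖v‖ ^ 2) ^ B * inner ℝ x v|
      ≤ √(1 + ‖x‖ ^ 2) ^ (A + 1) * √(1 + ‖v‖ ^ 2) ^ (1 - B) := by
  set X := √(1 + ‖x‖ ^ 2)
  set V := √(1 + ‖v‖ ^ 2)
  have hX : 0 < X := one_pos.trans_le (one_le_sqrt_one_add_sq _)
  have hV : 0 < V := one_pos.trans_le (one_le_sqrt_one_add_sq _)
  rw [abs_mul, abs_of_nonneg (by positivity)]
  calc X ^ A / V ^ B * |inner ℝ x v| ≤ X ^ A / V ^ B * (X * V) := by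
        gcongr
        exact abs_inner_le_sqrt_one_add_sq_mul x v
    _ = X ^ (A + 1) * V ^ (1 - B) := by
        rw [rpow_add hX, rpow_sub hV, rpow_one, rpow_one]
        field_simp

lemma rpow_le_rpow_of_rpow_le {X F α a b : ℝ} (hX : 1 ≤ X) (hb : 0 ≤ b)
    (hab : a ≤ α * b) (hXF : X ^ α ≤ F) : X ^ a ≤ F ^ b :=
  calc X ^ a ≤ X ^ (α * b) := rpow_le_rpow_of_exponent_le hX hab
    _ = (X ^ α) ^ b := rpow_mul (by linarith) α b
    _ ≤ F ^ b := rpow_le_rpow (by positivity) hXF hb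

section energy

variable {α : ℝ}

lemma sqrt_one_add_sq_rpow_le_mul_energy (hα : 0 < α) (r s : ℝ) :
    √(1 + r ^ 2) ^ α ≤ α * energy α r s := by
  rw [energy, mul_add, mul_div_cancel₀ _ hα.ne']
  nlinarith [sq_nonneg s]

lemma one_le_mul_energy (hα : 0 < α) (r s : ℝ) : 1 ≤ α * energy α r s :=
  (one_le_rpow (one_le_sqrt_one_add_sq r) hα.le).trans
    (sqrt_one_add_sq_rpow_le_mul_energy hα r s)

lemma sqrt_one_add_sq_rpow_two_le_mul_energy (hα : 1 ≤ α) (r s : ℝ) :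
    √(1 + s ^ 2) ^ (2 : ℝ) ≤ 3 * (α * energy α r s) := by
  have hα0 : 0 < α := one_pos.trans_le hα
  have h1 : 1 ≤ α * energy α r s := one_le_mul_energy hα0 r s
  have hs : s ^ 2 ≤ 2 * (α * energy α r s) := by
    have : 0 ≤ √(1 + r ^ 2) ^ α := by positivity
    rw [energy, mul_add, mul_div_cancel₀ _ hα0.ne']
    nlinarith [sq_nonneg s]
  rw [rpow_two, sq_sqrt (by positivity)]
  linarith

end energy

lemma abs_weight_mul_inner_le_energy_rpow {F : Type*} [NormedAddCommGroup F]
    [InnerProductSpace ℝ F] {α ℓ A B : ℝ} (hα : 1 < α) (hB : B ≤ 1)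
    (hparam : max (A + 1) 0 / α + (1 - B) / 2 ≤ ℓ) (x v : F) :
    |√(1 + ‖x‖ ^ 2) ^ A / √(1 + ‖v‖ ^ 2) ^ B * inner ℝ x v|
      ≤ 3 ^ ((1 - B) / 2) * α ^ ℓ * energy α ‖x‖ ‖v‖ ^ ℓ := by
  have hα0 : 0 < α := one_pos.trans hα
  set p := max (A + 1) 0 / α
  set q := (1 - B) / 2
  have hp : 0 ≤ p := by positivity
  have hq : 0 ≤ q := by simp only [q]; linarith
  set F := α * energy α ‖x‖ ‖v‖
  have hF : 1 ≤ F := one_le_mul_energy hα0 _ _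
  have hxF : √(1 + ‖x‖ ^ 2) ^ (A + 1) ≤ F ^ p :=
    rpow_le_rpow_of_rpow_le (one_le_sqrt_one_add_sq _) hp
      (by simp only [p]; rw [mul_div_cancel₀ _ hα0.ne']; exact le_max_left _ _)
      (sqrt_one_add_sq_rpow_le_mul_energy hα0 _ _)
  have hvF : √(1 + ‖v‖ ^ 2) ^ (1 - B) ≤ (3 * F) ^ q :=
    rpow_le_rpow_of_rpow_le (one_le_sqrt_one_add_sq _) hq (by simp only [q]; linarith)
      (sqrt_one_add_sq_rpow_two_le_mul_energy hα.le _ _)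
  calc |√(1 + ‖x‖ ^ 2) ^ A / √(1 + ‖v‖ ^ 2) ^ B * inner ℝ x v|
      ≤ √(1 + ‖x‖ ^ 2) ^ (A + 1) * √(1 + ‖v‖ ^ 2) ^ (1 - B) := abs_weight_mul_inner_le A B x v
    _ ≤ F ^ p * (3 * F) ^ q := by gcongr
    _ = 3 ^ q * F ^ (p + q) := by
        rw [mul_rpow zero_le_three (by linarith), rpow_add (by linarith)]
        ring
    _ ≤ 3 ^ q * F ^ ℓ := by grw [rpow_le_rpow_of_exponent_le hF hparam]
    _ = 3 ^ q * α ^ ℓ * energy α ‖x‖ ‖v‖ ^ ℓ := by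
        rw [mul_rpow hα0.le (by unfold energy; positivity)]
        ring

lemma add_mul_mem_Icc_of_abs_le {Q P C ε : ℝ} (hC : 0 < C) (hP : |P| ≤ C * Q) (hε : 0 ≤ ε)
    (hεC : ε ≤ 1 / (2 * C)) : 1 / 2 * Q ≤ Q + ε * P ∧ Q + ε * P ≤ 3 / 2 * Q := by
  have hεP : |ε * P| ≤ 1 / 2 * Q :=
    calc |ε * P| = ε * |P| := by rw [abs_mul, abs_of_nonneg hε]
      _ ≤ 1 / (2 * C) * (C * Q) := mul_le_mul hεC hP (abs_nonneg P) (by positivity)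
      _ = 1 / 2 * Q := by field_simp
  constructor <;> linarith [abs_le.mp hεP]

theorem stmt4_general {d : ℕ} (α ℓ A B : ℝ) (hα : 1 < α)
    (hB : B ∈ Set.Ioo (0 : ℝ) 1)
    (hparam : max (A + 1) 0 / α + (1 - B) / 2 ≤ ℓ)
    (E : EuclideanSpace ℝ (Fin d) → EuclideanSpace ℝ (Fin d) → ℝ)
    (hE : ∀ x v, E x v = ‖v‖ ^ 2 / 2 + (Real.sqrt (1 + ‖x‖ ^ 2)) ^ α / α) :
    ∃ c₁ > (0 : ℝ), ∃ c₂ > (0 : ℝ), ∃ ε₀ > (0 : ℝ), ∀ ε : ℝ, 0 < ε → ε ≤ ε₀ →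
      ∀ x v : EuclideanSpace ℝ (Fin d),
        c₁ * (E x v) ^ ℓ
            ≤ (E x v) ^ ℓ
              + ε * ((Real.sqrt (1 + ‖x‖ ^ 2)) ^ A / (Real.sqrt (1 + ‖v‖ ^ 2)) ^ B)
                * (inner ℝ x v : ℝ)
          ∧ (E x v) ^ ℓ
              + ε * ((Real.sqrt (1 + ‖x‖ ^ 2)) ^ A / (Real.sqrt (1 + ‖v‖ ^ 2)) ^ B)
                * (inner ℝ x v : ℝ)
            ≤ c₂ * (E x v) ^ ℓ := by
  have hα0 : 0 < α := one_pos.trans hα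
  refine ⟨1 / 2, by norm_num, 3 / 2, by norm_num, 1 / (2 * (3 ^ ((1 - B) / 2) * α ^ ℓ)),
    by positivity, ?_⟩
  intro ε hε hεle x v
  rw [mul_assoc ε, hE x v]
  exact add_mul_mem_Icc_of_abs_le (by positivity)
    (abs_weight_mul_inner_le_energy_rpow hα hB.2.le hparam x v) hε.le hεle

theorem stmt4 {d : ℕ} (hd : 1 ≤ d) (α ℓ A B : ℝ) (hα : 1 < α) (hℓ : 1 < ℓ)
    (hB : B ∈ Set.Ioo (0 : ℝ) 1)
    (hparam : max (A + 1) 0 / α + (1 - B) / 2 ≤ ℓ)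
    (E : EuclideanSpace ℝ (Fin d) → EuclideanSpace ℝ (Fin d) → ℝ)
    (hE : ∀ x v, E x v = ‖v‖ ^ 2 / 2 + (Real.sqrt (1 + ‖x‖ ^ 2)) ^ α / α) :
    ∃ c₁ > (0 : ℝ), ∃ c₂ > (0 : ℝ), ∃ ε₀ > (0 : ℝ), ∀ ε : ℝ, 0 < ε → ε ≤ ε₀ →
      ∀ x v : EuclideanSpace ℝ (Fin d),
        c₁ * (E x v) ^ ℓ
            ≤ (E x v) ^ ℓ
              + ε * ((Real.sqrt (1 + ‖x‖ ^ 2)) ^ A / (Real.sqrt (1 + ‖v‖ ^ 2)) ^ B)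
                * (inner ℝ x v : ℝ)
          ∧ (E x v) ^ ℓ
              + ε * ((Real.sqrt (1 + ‖x‖ ^ 2)) ^ A / (Real.sqrt (1 + ‖v‖ ^ 2)) ^ B)
                * (inner ℝ x v : ℝ)
            ≤ c₂ * (E x v) ^ ℓ :=
  stmt4_general α ℓ A B hα hB hparam E hE
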